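/- arXiv:2602.14007 — 2 statements merged into one kernel-verified Lean document; each statement's English description precedes it below -/
import Mathlib

section
/- Let A, B ∈ ℙ_d with A ≠ B and set D := δ(A, B). Then for all s, t ∈ [0, D], δ(A #_{s/D} B, A #_{t/D} B) = |s − t|; i.e., the curve γ(t) = A #_{t/D} B, t ∈ [0, D], is a unit-speed geodesic from A to B in the metric space (ℙ_d, δ). -/
noncomputable section

open Matrix
open scoped ComplexOrder

/-- Real functional calculus of a matrix, via the Hermitian eigendecomposition
(junk value `0` if the matrix is not Hermitian). -/
noncomputable def fcal {d : ℕ} (f : ℝ → ℝ) (A : Matrix (Fin d) (Fin d) ℂ) :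
    Matrix (Fin d) (Fin d) ℂ :=
  if hA : A.IsHermitian then hA.cfc f else 0

/-- Matrix logarithm of a positive-definite matrix (functional calculus). -/
noncomputable def mlog {d : ℕ} (A : Matrix (Fin d) (Fin d) ℂ) : Matrix (Fin d) (Fin d) ℂ :=
  fcal Real.log A

/-- Real power of a positive-definite matrix (functional calculus). -/
noncomputable def mpow {d : ℕ} (A : Matrix (Fin d) (Fin d) ℂ) (t : ℝ) :
    Matrix (Fin d) (Fin d) ℂ :=
  fcal (fun x => x ^ t) A

/-- Frobenius (Hilbert–Schmidt) norm of a matrix. -/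
noncomputable def hsNorm {d : ℕ} (A : Matrix (Fin d) (Fin d) ℂ) : ℝ :=
  Real.sqrt (∑ i, ∑ j, ‖A i j‖ ^ 2)

/-- The Riemannian trace-metric distance δ(A, B) = ‖log (A^{-1/2} B A^{-1/2})‖_HS. -/
noncomputable def rdist {d : ℕ} (A B : Matrix (Fin d) (Fin d) ℂ) : ℝ :=
  hsNorm (mlog (mpow A (-(1 / 2 : ℝ)) * B * mpow A (-(1 / 2 : ℝ))))

/-- The t-weighted geometric mean A #_t B = A^{1/2} (A^{-1/2} B A^{-1/2})^t A^{1/2}. -/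
noncomputable def gmean {d : ℕ} (A B : Matrix (Fin d) (Fin d) ℂ) (t : ℝ) :
    Matrix (Fin d) (Fin d) ℂ :=
  mpow A (1 / 2 : ℝ) * mpow (mpow A (-(1 / 2 : ℝ)) * B * mpow A (-(1 / 2 : ℝ))) t *
    mpow A (1 / 2 : ℝ)

/-- The objective function F_p(X; 𝔸) = (1/n) ∑ₖ δ(X, Aₖ)^p. -/
noncomputable def Fobj {d n : ℕ} (p : ℝ) (A : Fin n → Matrix (Fin d) (Fin d) ℂ)
    (X : Matrix (Fin d) (Fin d) ℂ) : ℝ :=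
  (1 / (n : ℝ)) * ∑ k, rdist X (A k) ^ p

/-! The curve `u ↦ A #_u B` is `A^{1/2} C^u A^{1/2}` with `C = A^{-1/2} B A^{-1/2}`. The distance
`δ(X, Y)` only depends on the spectrum of `Y X⁻¹`, and for `X = A #_s B`, `Y = A #_t B` the matrix
`Y X⁻¹ = A^{1/2} C^{t-s} A^{-1/2}` is similar to `C^{t-s}`. Hence
`δ(A #_s B, A #_t B) = ‖log C^{t-s}‖ = |t - s| ‖log C‖ = |t - s| δ(A, B)`, and rescaling by
`D = δ(A, B) > 0` gives a unit-speed curve. -/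

section FunctionalCalculus

variable {𝕜 : Type*} [RCLike 𝕜] {n : Type*} [Fintype n] [DecidableEq n] {M : Matrix n n 𝕜}

lemma Matrix.continuousOn_spectrum (f : ℝ → ℝ) (M : Matrix n n 𝕜) :
    ContinuousOn f (spectrum ℝ M) :=
  M.finite_real_spectrum.continuousOn f

lemma Matrix.PosDef.spectrum_pos (hM : M.PosDef) {x : ℝ} (hx : x ∈ spectrum ℝ M) : 0 < x := by
  obtain ⟨i, rfl⟩ := hM.isHermitian.spectrum_real_eq_range_eigenvalues ▸ hx
  exact hM.eigenvalues_pos i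

lemma Matrix.IsHermitian.cfc_posDef (hM : M.IsHermitian) {f : ℝ → ℝ}
    (hf : ∀ i, 0 < f (hM.eigenvalues i)) : (hM.cfc f).PosDef := by
  rw [IsHermitian.cfc, Unitary.conjStarAlgAut_apply,
    IsUnit.posDef_star_right_conjugate_iff Unitary.isUnit_coe, posDef_diagonal_iff]
  exact fun i => by simpa using hf i

lemma Matrix.IsHermitian.trace_cfc (hM : M.IsHermitian) (f : ℝ → ℝ) :
    (cfc f M).trace = ∑ i, (f (hM.eigenvalues i) : 𝕜) := by
  rw [hM.cfc_eq, IsHermitian.cfc, Unitary.conjStarAlgAut_apply, trace_mul_cycle,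
    Unitary.coe_star_mul_self, one_mul, trace_diagonal]
  rfl

end FunctionalCalculus

lemma Matrix.sum_norm_sq_eq_re_trace {m n : Type*} [Fintype m] [Fintype n] (M : Matrix m n ℂ) :
    ∑ i, ∑ j, ‖M i j‖ ^ 2 = (Mᴴ * M).trace.re := by
  rw [trace, Complex.re_sum, Finset.sum_comm]
  refine Finset.sum_congr rfl fun j _ => ?_
  rw [diag_apply, mul_apply, Complex.re_sum]
  refine Finset.sum_congr rfl fun i _ => ?_
  rw [conjTranspose_apply, Complex.star_def, mul_comm, Complex.mul_conj, Complex.ofReal_re,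
    Complex.normSq_eq_norm_sq]

variable {d : ℕ} {M N : Matrix (Fin d) (Fin d) ℂ}

lemma fcal_eq_cfc (hM : M.IsHermitian) (f : ℝ → ℝ) : fcal f M = cfc f M := by
  rw [fcal, dif_pos hM, hM.cfc_eq]

lemma mpow_eq_cfc (hM : M.IsHermitian) (t : ℝ) : mpow M t = cfc (fun x : ℝ => x ^ t) M :=
  fcal_eq_cfc hM _

lemma mlog_eq_cfc (hM : M.IsHermitian) : mlog M = cfc Real.log M :=
  fcal_eq_cfc hM _

lemma mpow_posDef (hM : M.PosDef) (t : ℝ) : (mpow M t).PosDef := by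
  rw [mpow, fcal, dif_pos hM.isHermitian]
  exact hM.isHermitian.cfc_posDef fun i => Real.rpow_pos_of_pos (hM.eigenvalues_pos i) t

lemma mpow_mul_mpow (hM : M.PosDef) (s t : ℝ) : mpow M s * mpow M t = mpow M (s + t) := by
  simp only [mpow_eq_cfc hM.isHermitian]
  rw [← cfc_mul _ _ M (continuousOn_spectrum _ _) (continuousOn_spectrum _ _)]
  exact cfc_congr fun x hx => (Real.rpow_add (hM.spectrum_pos hx) s t).symm

lemma mpow_zero (hM : M.PosDef) : mpow M 0 = 1 := by
  simp only [mpow_eq_cfc hM.isHermitian, Real.rpow_zero]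
  exact cfc_const_one ℝ M hM.isHermitian

lemma mpow_one (hM : M.PosDef) : mpow M 1 = M := by
  simp only [mpow_eq_cfc hM.isHermitian, Real.rpow_one]
  exact cfc_id' ℝ M hM.isHermitian

lemma mpow_mul_mpow_neg (hM : M.PosDef) (t : ℝ) : mpow M t * mpow M (-t) = 1 := by
  rw [mpow_mul_mpow hM, add_neg_cancel, mpow_zero hM]

lemma mpow_neg_mul_mpow (hM : M.PosDef) (t : ℝ) : mpow M (-t) * mpow M t = 1 := by
  rw [mpow_mul_mpow hM, neg_add_cancel, mpow_zero hM]

lemma mpow_neg (hM : M.PosDef) (t : ℝ) : mpow M (-t) = (mpow M t)⁻¹ :=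
  (Matrix.inv_eq_right_inv (mpow_mul_mpow_neg hM t)).symm

lemma mpow_half_mul_self (hM : M.PosDef) : mpow M (1 / 2) * mpow M (1 / 2) = M := by
  rw [mpow_mul_mpow hM, add_halves, mpow_one hM]

lemma mpow_neg_half_mul_self (hM : M.PosDef) :
    mpow M (-(1 / 2)) * mpow M (-(1 / 2)) = M⁻¹ := by
  rw [mpow_mul_mpow hM, show -(1 / 2 : ℝ) + -(1 / 2) = -1 by norm_num, mpow_neg hM, mpow_one hM]

lemma Matrix.PosDef.conj_mpow (hM : M.PosDef) (hN : N.PosDef) (t : ℝ) :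
    (mpow M t * N * mpow M t).PosDef := by
  have hP := mpow_posDef hM t
  simpa only [hP.isHermitian.eq, star_eq_conjTranspose] using
    (IsUnit.posDef_star_left_conjugate_iff hP.isUnit).mpr hN

lemma mlog_mpow (hM : M.PosDef) (t : ℝ) : mlog (mpow M t) = t • mlog M := by
  rw [mlog_eq_cfc (mpow_posDef hM t).isHermitian, mpow_eq_cfc hM.isHermitian,
    mlog_eq_cfc hM.isHermitian]
  refine (cfc_comp' Real.log (fun x => x ^ t) M ((M.finite_real_spectrum.image _).continuousOn _)
    (continuousOn_spectrum _ _) hM.isHermitian).symm.trans ?_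
  rw [← cfc_const_mul _ _ M (continuousOn_spectrum _ _)]
  exact cfc_congr fun x hx => Real.log_rpow (hM.spectrum_pos hx) t

lemma hsNorm_smul (c : ℝ) (M : Matrix (Fin d) (Fin d) ℂ) : hsNorm (c • M) = |c| * hsNorm M := by
  simp only [hsNorm, Matrix.smul_apply, norm_smul, mul_pow, ← Finset.mul_sum, Real.norm_eq_abs,
    sq_abs]
  rw [Real.sqrt_mul (sq_nonneg c), Real.sqrt_sq_eq_abs]

lemma hsNorm_cfc (hM : M.IsHermitian) (f : ℝ → ℝ) :
    hsNorm (cfc f M) = √(∑ i, f (hM.eigenvalues i) ^ 2) := by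
  have hsq : (cfc f M)ᴴ * cfc f M = cfc (fun x => f x ^ 2) M := by
    rw [← star_eq_conjTranspose, IsSelfAdjoint.cfc.star_eq, ← cfc_mul _ _ M
      (continuousOn_spectrum _ _) (continuousOn_spectrum _ _)]
    simp only [sq]
  rw [hsNorm, sum_norm_sq_eq_re_trace, hsq, hM.trace_cfc, Complex.re_sum]
  rfl

lemma hsNorm_cfc_eq_of_charpoly_eq (hM : M.IsHermitian) (hN : N.IsHermitian)
    (h : M.charpoly = N.charpoly) (f : ℝ → ℝ) : hsNorm (cfc f M) = hsNorm (cfc f N) := by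
  rw [hsNorm_cfc hM, hsNorm_cfc hN, (hM.eigenvalues_eq_eigenvalues_iff hN).mpr h]

lemma eq_one_of_hsNorm_mlog_eq_zero (hM : M.PosDef) (h : hsNorm (mlog M) = 0) : M = 1 := by
  rw [mlog_eq_cfc hM.isHermitian, hsNorm_cfc hM.isHermitian,
    Real.sqrt_eq_zero (Finset.sum_nonneg fun i _ => sq_nonneg _),
    Finset.sum_eq_zero_iff_of_nonneg fun i _ => sq_nonneg _] at h
  calc M = cfc (fun x : ℝ => x) M := (cfc_id' ℝ M hM.isHermitian).symm
    _ = cfc (fun _ : ℝ => 1) M := cfc_congr fun x hx => by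
      obtain ⟨i, rfl⟩ := hM.isHermitian.spectrum_real_eq_range_eigenvalues ▸ hx
      exact Real.eq_one_of_pos_of_log_eq_zero (hM.eigenvalues_pos i)
        (pow_eq_zero_iff two_ne_zero |>.mp (h i (Finset.mem_univ i)))
    _ = 1 := cfc_const_one ℝ M hM.isHermitian

section Distance

variable {A B : Matrix (Fin d) (Fin d) ℂ}

lemma rdist_nonneg (A B : Matrix (Fin d) (Fin d) ℂ) : 0 ≤ rdist A B :=
  Real.sqrt_nonneg _

lemma rdist_eq_hsNorm_mlog_of_charpoly_eq (hA : A.PosDef) (hB : B.PosDef) (hN : N.IsHermitian)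
    (h : (B * A⁻¹).charpoly = N.charpoly) : rdist A B = hsNorm (mlog N) := by
  have hC := hA.conj_mpow hB (-(1 / 2))
  have hCN : (mpow A (-(1 / 2)) * B * mpow A (-(1 / 2))).charpoly = N.charpoly := by
    rw [mul_assoc, charpoly_mul_comm, mul_assoc, mpow_neg_half_mul_self hA, h]
  rw [rdist, mlog_eq_cfc hC.isHermitian, mlog_eq_cfc hN,
    hsNorm_cfc_eq_of_charpoly_eq hC.isHermitian hN hCN]

lemma eq_of_rdist_eq_zero (hA : A.PosDef) (hB : B.PosDef) (h : rdist A B = 0) : A = B := by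
  have hC := eq_one_of_hsNorm_mlog_eq_zero (hA.conj_mpow hB _) h
  calc A = mpow A (1 / 2) * mpow A (1 / 2) := (mpow_half_mul_self hA).symm
    _ = mpow A (1 / 2) * (mpow A (-(1 / 2)) * B * mpow A (-(1 / 2))) * mpow A (1 / 2) := by
      rw [hC, mul_one]
    _ = B := by
      rw [← mul_assoc, ← mul_assoc, mpow_mul_mpow_neg hA, one_mul, mul_assoc,
        mpow_neg_mul_mpow hA, mul_one]

lemma gmean_posDef (hA : A.PosDef) (hB : B.PosDef) (t : ℝ) : (gmean A B t).PosDef :=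
  hA.conj_mpow (mpow_posDef (hA.conj_mpow hB _) t) _

lemma gmean_mul_inv_gmean (hA : A.PosDef) (hB : B.PosDef) (s t : ℝ) :
    gmean A B t * (gmean A B s)⁻¹ = mpow A (1 / 2) *
      mpow (mpow A (-(1 / 2)) * B * mpow A (-(1 / 2))) (t - s) * mpow A (-(1 / 2)) := by
  have hC := hA.conj_mpow hB (-(1 / 2))
  rw [gmean, gmean, Matrix.mul_inv_rev, Matrix.mul_inv_rev, ← mpow_neg hA, ← mpow_neg hC]
  generalize mpow A (-(1 / 2)) * B * mpow A (-(1 / 2)) = C at hC ⊢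
  simp only [mul_assoc]
  rw [← mul_assoc (mpow A (1 / 2)) (mpow A (-(1 / 2))), mpow_mul_mpow_neg hA, one_mul,
    ← mul_assoc (mpow C t), mpow_mul_mpow hC, ← sub_eq_add_neg]

lemma rdist_gmean_gmean (hA : A.PosDef) (hB : B.PosDef) (s t : ℝ) :
    rdist (gmean A B s) (gmean A B t) = |t - s| * rdist A B := by
  have hC := hA.conj_mpow hB (-(1 / 2))
  have hcp : (gmean A B t * (gmean A B s)⁻¹).charpoly =
      (mpow (mpow A (-(1 / 2)) * B * mpow A (-(1 / 2))) (t - s)).charpoly := by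
    rw [gmean_mul_inv_gmean hA hB, mul_assoc, charpoly_mul_comm, mul_assoc,
      mpow_neg_mul_mpow hA, mul_one]
  rw [rdist_eq_hsNorm_mlog_of_charpoly_eq (gmean_posDef hA hB s) (gmean_posDef hA hB t)
    (mpow_posDef hC _).isHermitian hcp, mlog_mpow hC, hsNorm_smul, rdist]

end Distance

/-- t ↦ A #_{t/D} B is a unit-speed geodesic from A to B. -/
theorem stmt2 {d : ℕ} (A B : Matrix (Fin d) (Fin d) ℂ) (hA : A.PosDef) (hB : B.PosDef)
    (hAB : A ≠ B) :
    ∀ s ∈ Set.Icc (0 : ℝ) (rdist A B), ∀ t ∈ Set.Icc (0 : ℝ) (rdist A B),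
      rdist (gmean A B (s / rdist A B)) (gmean A B (t / rdist A B)) = |s - t| := by
  intro s _ t _
  have hD : 0 < rdist A B :=
    (rdist_nonneg A B).lt_of_ne fun h => hAB (eq_of_rdist_eq_zero hA hB h.symm)
  rw [rdist_gmean_gmean hA hB, ← sub_div, abs_div, abs_of_pos hD, div_mul_cancel₀ _ hD.ne',
    abs_sub_comm]
end
end

section
/- Fix 𝔸 = (A₁, …, Aₙ) ∈ ℙ_dⁿ. For every compact subset K ⊆ ℙ_d there exists L > 0 such that sup_{X ∈ K} |F_p(X; 𝔸) − F₁(X; 𝔸)| ≤ L·(p − 1) for all p ∈ (1, 2]. In particular, F_p(·; 𝔸) converges to F₁(·; 𝔸) uniformly on every compact subset of ℙ_d as p ↓ 1. -/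
noncomputable section

open Matrix
open scoped ComplexOrder

/-! For `0 ≤ t` and `1 ≤ p ≤ 2`, Bernoulli's inequality in both directions gives
`|t ^ p - t| ≤ (p - 1) (1 + t ^ 2)`, so it suffices to bound `δ(X, Aₖ)` uniformly for
`X ∈ K`. If `μ` are the eigenvalues of `X^{-1/2} A X^{-1/2}`, then
`δ(X, A) ≤ ∑ |log μᵢ| ≤ ∑ (μᵢ + μᵢ⁻¹) = Re tr (X⁻¹ A) + Re tr (X A⁻¹)`,
which is continuous in `X` and hence bounded on the compact set `K`. -/

theorem Real.self_sub_rpow_le {t p : ℝ} (ht : 0 ≤ t) (hp : 1 ≤ p) : t - t ^ p ≤ p - 1 := by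
  have := one_add_mul_self_le_rpow_one_add (s := t - 1) (by linarith) hp
  rw [add_sub_cancel] at this
  nlinarith

theorem Real.rpow_sub_self_le {t p : ℝ} (ht : 0 ≤ t) (hp₁ : 1 ≤ p) (hp₂ : p ≤ 2) :
    t ^ p - t ≤ (p - 1) * t ^ 2 := by
  rcases ht.eq_or_lt with rfl | ht
  · rw [Real.zero_rpow (by linarith)]; simp
  have hbern := rpow_one_add_le_one_add_mul_self (s := t - 1) (p := p - 1) (by linarith)
    (by linarith) (by linarith)
  rw [add_sub_cancel] at hbern
  have hsplit : t ^ p = t * t ^ (p - 1) := by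
    rw [Real.rpow_sub ht, Real.rpow_one, mul_div_cancel₀ _ ht.ne']
  rw [hsplit]
  nlinarith [mul_le_mul_of_nonneg_left hbern ht.le]

theorem Real.abs_rpow_sub_self_le {t p : ℝ} (ht : 0 ≤ t) (hp₁ : 1 ≤ p) (hp₂ : p ≤ 2) :
    |t ^ p - t| ≤ (p - 1) * (1 + t ^ 2) := by
  rw [abs_sub_le_iff]
  constructor <;>
    nlinarith [Real.rpow_sub_self_le ht hp₁ hp₂, Real.self_sub_rpow_le ht hp₁, sq_nonneg t]

theorem Real.abs_log_le_add_inv {x : ℝ} (hx : 0 < x) : |Real.log x| ≤ x + x⁻¹ := by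
  have h₁ := Real.log_le_sub_one_of_pos hx
  have h₂ := Real.log_le_sub_one_of_pos (inv_pos.mpr hx)
  rw [Real.log_inv] at h₂
  rw [abs_le]
  constructor <;> linarith [inv_pos.mpr hx]

namespace Matrix

variable {m n 𝕜 : Type*} [RCLike 𝕜] [Fintype m] [Fintype n]

theorem sum_norm_sq_eq_re_trace_s6 (M : Matrix m n 𝕜) :
    ∑ i, ∑ j, ‖M i j‖ ^ 2 = RCLike.re (Mᴴ * M).trace := by
  simp only [trace, diag, mul_apply, conjTranspose_apply, map_sum, RCLike.star_def,
    RCLike.conj_mul, ← RCLike.ofReal_pow, RCLike.ofReal_re]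
  exact Finset.sum_comm

variable [DecidableEq n]

theorem IsHermitian.trace_cfc_s6 {A : Matrix n n 𝕜} (hA : A.IsHermitian) (f : ℝ → ℝ) :
    (cfc f A).trace = ∑ i, (f (hA.eigenvalues i) : 𝕜) := by
  rw [hA.cfc_eq, IsHermitian.cfc, Unitary.conjStarAlgAut_apply, trace_mul_cycle,
    Unitary.star_mul_self_of_mem (SetLike.coe_mem _), one_mul, trace_diagonal]
  rfl

theorem IsHermitian.sum_norm_sq_cfc {A : Matrix n n 𝕜} (hA : A.IsHermitian) (f : ℝ → ℝ) :
    ∑ i, ∑ j, ‖cfc f A i j‖ ^ 2 = ∑ i, f (hA.eigenvalues i) ^ 2 := by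
  have hfin := A.finite_real_spectrum
  have hsa : (cfc f A)ᴴ = cfc f A := (cfc_predicate f A).star_eq
  rw [sum_norm_sq_eq_re_trace_s6, hsa, ← cfc_mul f f A (hfin.continuousOn _) (hfin.continuousOn _),
    hA.trace_cfc_s6, map_sum]
  simp [sq]

theorem IsHermitian.re_trace_eq_sum_eigenvalues {A : Matrix n n 𝕜} (hA : A.IsHermitian) :
    RCLike.re A.trace = ∑ i, hA.eigenvalues i := by
  simp only [hA.trace_eq_sum_eigenvalues, map_sum, RCLike.ofReal_re]

theorem PosDef.pos_of_mem_spectrum {A : Matrix n n 𝕜} (hA : A.PosDef) {x : ℝ}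
    (hx : x ∈ spectrum ℝ A) : 0 < x := by
  obtain ⟨i, rfl⟩ := hA.1.spectrum_real_eq_range_eigenvalues ▸ hx
  exact hA.eigenvalues_pos i

theorem PosDef.cfc_inv {A : Matrix n n 𝕜} (hA : A.PosDef) :
    cfc (fun x : ℝ => x⁻¹) A = A⁻¹ := by
  rw [nonsing_inv_eq_ringInverse]
  exact cfc_ringInverse_id A hA.isUnit hA.1

theorem PosDef.re_trace_inv {A : Matrix n n 𝕜} (hA : A.PosDef) :
    RCLike.re A⁻¹.trace = ∑ i, (hA.1.eigenvalues i)⁻¹ := by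
  simp only [← hA.cfc_inv, hA.1.trace_cfc_s6, map_sum, RCLike.ofReal_re]

end Matrix

section

variable {d : ℕ}

theorem fcal_eq_cfc_s6 {A : Matrix (Fin d) (Fin d) ℂ} (hA : A.IsHermitian) (f : ℝ → ℝ) :
    fcal f A = cfc f A := by
  rw [fcal, dif_pos hA, hA.cfc_eq]

theorem hsNorm_cfc_le {B : Matrix (Fin d) (Fin d) ℂ} (hB : B.IsHermitian) (f : ℝ → ℝ) :
    hsNorm (cfc f B) ≤ ∑ i, |f (hB.eigenvalues i)| := by
  have hnonneg : 0 ≤ ∑ i, |f (hB.eigenvalues i)| := Finset.sum_nonneg fun _ _ => abs_nonneg _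
  rw [hsNorm, hB.sum_norm_sq_cfc, Real.sqrt_le_left hnonneg]
  simpa only [sq_abs] using
    Finset.sum_sq_le_sq_sum_of_nonneg fun i _ => abs_nonneg (f (hB.eigenvalues i))

theorem mpow_neg_half_mul_self_s6 {X : Matrix (Fin d) (Fin d) ℂ} (hX : X.PosDef) :
    mpow X (-(1 / 2)) * mpow X (-(1 / 2)) = X⁻¹ := by
  have hfin := X.finite_real_spectrum
  rw [mpow, fcal_eq_cfc_s6 hX.1, ← cfc_mul _ _ X (hfin.continuousOn _) (hfin.continuousOn _),
    ← hX.cfc_inv]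
  refine cfc_congr fun x hx => ?_
  have hx : 0 < x := hX.pos_of_mem_spectrum hx
  rw [← Real.rpow_add hx, ← Real.rpow_neg_one]
  norm_num

theorem rdist_le_re_trace {X A : Matrix (Fin d) (Fin d) ℂ} (hX : X.PosDef) (hA : A.PosDef) :
    rdist X A ≤ (X⁻¹ * A).trace.re + (X * A⁻¹).trace.re := by
  set Y := mpow X (-(1 / 2))
  have hYY : Y * Y = X⁻¹ := mpow_neg_half_mul_self_s6 hX
  have hY : Y.IsHermitian := by
    simp only [Y, mpow, fcal_eq_cfc_s6 hX.1]
    exact cfc_predicate _ X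
  have hYunit : IsUnit Y := isUnit_of_mul_isUnit_left (hYY ▸ hX.inv.isUnit)
  have hB : (Y * A * Y).PosDef := by
    simpa only [hY.eq] using hA.conjTranspose_mul_mul_same (mulVec_injective_iff_isUnit.mpr hYunit)
  have htr : (Y * A * Y).trace = (X⁻¹ * A).trace := by
    rw [trace_mul_cycle, hYY]
  have htr_inv : (Y * A * Y)⁻¹.trace = (X * A⁻¹).trace := by
    rw [Matrix.mul_inv_rev, Matrix.mul_inv_rev, ← mul_assoc, trace_mul_cycle,
      ← Matrix.mul_inv_rev, hYY, nonsing_inv_nonsing_inv X hX.det_pos.ne'.isUnit]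
  calc rdist X A = hsNorm (cfc Real.log (Y * A * Y)) := by rw [rdist, mlog, fcal_eq_cfc_s6 hB.1]
    _ ≤ ∑ i, |Real.log (hB.1.eigenvalues i)| := hsNorm_cfc_le hB.1 _
    _ ≤ ∑ i, (hB.1.eigenvalues i + (hB.1.eigenvalues i)⁻¹) :=
      Finset.sum_le_sum fun i _ => Real.abs_log_le_add_inv (hB.eigenvalues_pos i)
    _ = (X⁻¹ * A).trace.re + (X * A⁻¹).trace.re := by
      rw [Finset.sum_add_distrib, ← hB.1.re_trace_eq_sum_eigenvalues, ← hB.re_trace_inv, htr, htr_inv]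
      rfl

theorem IsCompact.exists_forall_rdist_le {K : Set (Matrix (Fin d) (Fin d) ℂ)} (hK : IsCompact K)
    (hKP : ∀ X ∈ K, X.PosDef) {A : Matrix (Fin d) (Fin d) ℂ} (hA : A.PosDef) :
    ∃ C, ∀ X ∈ K, rdist X A ≤ C := by
  have hinv : ContinuousOn (fun X : Matrix (Fin d) (Fin d) ℂ => X⁻¹) K := fun X hX =>
    (continuousAt_matrix_inv X (by
      rw [Ring.inverse_eq_inv']
      exact continuousAt_inv₀ (hKP X hX).det_pos.ne')).continuousWithinAt
  have hcont : ContinuousOn (fun X => (X⁻¹ * A).trace.re + (X * A⁻¹).trace.re) K := by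
    fun_prop
  obtain ⟨C, hC⟩ := hK.bddAbove_image hcont
  exact ⟨C, fun X hX => (rdist_le_re_trace (hKP X hX) hA).trans (hC ⟨X, hX, rfl⟩)⟩

theorem abs_Fobj_sub_Fobj_one_le {n : ℕ} {p M : ℝ} (hp₁ : 1 ≤ p) (hp₂ : p ≤ 2)
    {A : Fin n → Matrix (Fin d) (Fin d) ℂ} {X : Matrix (Fin d) (Fin d) ℂ}
    (hM : ∀ k, rdist X (A k) ≤ M) :
    |Fobj p A X - Fobj 1 A X| ≤ (1 + M ^ 2) * (p - 1) := by
  have hterm : ∀ k,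
      |rdist X (A k) ^ p - rdist X (A k) ^ (1 : ℝ)| ≤ (p - 1) * (1 + M ^ 2) := by
    intro k
    have h0 : 0 ≤ rdist X (A k) := Real.sqrt_nonneg _
    rw [Real.rpow_one]
    refine (Real.abs_rpow_sub_self_le h0 hp₁ hp₂).trans ?_
    gcongr
    exact hM k
  calc |Fobj p A X - Fobj 1 A X|
      = (1 / n) * |∑ k, (rdist X (A k) ^ p - rdist X (A k) ^ (1 : ℝ))| := by
        rw [Fobj, Fobj, ← mul_sub, ← Finset.sum_sub_distrib, abs_mul,
          abs_of_nonneg (by positivity)]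
    _ ≤ (1 / n) * ∑ _k : Fin n, (p - 1) * (1 + M ^ 2) := by
        gcongr
        exact (Finset.abs_sum_le_sum_abs _ _).trans (Finset.sum_le_sum fun k _ => hterm k)
    _ ≤ (1 + M ^ 2) * (p - 1) := by
        have hmean : 1 / (n : ℝ) * n ≤ 1 := by rw [one_div_mul_eq_div]; exact div_self_le_one _
        rw [Finset.sum_const, Finset.card_univ, Fintype.card_fin, nsmul_eq_mul, ← mul_assoc,
          mul_comm (p - 1)]
        exact mul_le_of_le_one_left (by nlinarith) hmean

end

theorem stmt6_general {d n : ℕ} (A : Fin n → Matrix (Fin d) (Fin d) ℂ)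
    (hA : ∀ k, (A k).PosDef)
    (K : Set (Matrix (Fin d) (Fin d) ℂ)) (hK : IsCompact K) (hKP : ∀ X ∈ K, X.PosDef) :
    ∃ L > (0 : ℝ), ∀ p ∈ Set.Ioc (1 : ℝ) 2, ∀ X ∈ K,
      |Fobj p A X - Fobj 1 A X| ≤ L * (p - 1) := by
  choose C hC using fun k => hK.exists_forall_rdist_le hKP (hA k)
  obtain ⟨M, hM⟩ := Finite.bddAbove_range C
  exact ⟨1 + M ^ 2, by positivity, fun p hp X hX =>
    abs_Fobj_sub_Fobj_one_le hp.1.le hp.2 fun k => (hC k X hX).trans (hM ⟨k, rfl⟩)⟩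

/-- uniform convergence of F_p to F₁ on compact subsets of ℙ_d as p ↓ 1,
with a linear rate L·(p-1). -/
theorem stmt6 {d n : ℕ} (hn : 0 < n) (A : Fin n → Matrix (Fin d) (Fin d) ℂ)
    (hA : ∀ k, (A k).PosDef)
    (K : Set (Matrix (Fin d) (Fin d) ℂ)) (hK : IsCompact K) (hKP : ∀ X ∈ K, X.PosDef) :
    ∃ L > (0 : ℝ), ∀ p ∈ Set.Ioc (1 : ℝ) 2, ∀ X ∈ K,
      |Fobj p A X - Fobj 1 A X| ≤ L * (p - 1) :=
  stmt6_general A hA K hK hKP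
end
end
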